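/- Let s ∈ (1,∞) and let φ : ℝⁿ₊ → ℝ be a smooth compactly supported function on the closed half-space ℝⁿ₊ = {x = (x', xₙ) : xₙ > 0}. Then the trace of φ on the boundary satisfies the multiplicative estimate ‖φ(·,0)‖_{L^s(ℝ^{n-1})}^s ≤ s · ‖φ‖_{L^s(ℝⁿ₊)}^{s-1} · ‖∂ₙφ‖_{L^s(ℝⁿ₊)} up to raising to appropriate powers; in particular ‖φ(·,0)‖_{L^s(ℝ^{n-1})} ≤ C ‖φ‖_{L^s(ℝⁿ₊)}^{1/s'} ‖φ‖_{W^{1,s}(ℝⁿ₊)}^{1/s} where 1/s + 1/s' = 1 and C depends only on s. -/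

import Mathlib

open MeasureTheory

private lemma trace_slice_est (k : ℕ) (s : ℝ) (hs : 1 < s) (φ : ((Fin k → ℝ) × ℝ) → ℝ)
    (hφ : ContDiff ℝ (⊤ : ℕ∞) φ)
    (R : ℝ) (hR0 : 0 ≤ R)
    (hzero : ∀ x : (Fin k → ℝ) × ℝ, R < ‖x‖ → φ x = 0 ∧ fderiv ℝ φ x = 0)
    (x' : Fin k → ℝ) :
    |φ (x', 0)| ^ s ≤ ∫ t in Set.Ioi (0:ℝ),
      s * (|φ (x', t)| ^ (s - 1) * |fderiv ℝ φ (x', t) ((0 : Fin k → ℝ), (1:ℝ))|) := by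
  have hs0 : (0:ℝ) < s := by linarith
  set H : ((Fin k → ℝ) × ℝ) → ℝ :=
    fun x => s * (|φ x| ^ (s - 1) * |fderiv ℝ φ x ((0 : Fin k → ℝ), (1:ℝ))|) with hH
  have hφdiff : Differentiable ℝ φ := hφ.differentiable (by simp)
  have hfdcont : Continuous (fderiv ℝ φ) := hφ.continuous_fderiv (by simp)
  have hfdapp : Continuous (fun x => fderiv ℝ φ x ((0 : Fin k → ℝ), (1:ℝ))) :=
    hfdcont.clm_apply continuous_const
  have hHcont : Continuous H := by
    apply continuous_const.mul
    exact ((continuous_abs.comp hφ.continuous).rpow_const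
      (fun x => Or.inr (by linarith))).mul hfdapp.abs
  set ψ : ℝ → ℝ := fun t => φ (x', t) with hψ
  have hline : ∀ t : ℝ, HasDerivAt ψ (fderiv ℝ φ (x', t) ((0 : Fin k → ℝ), (1:ℝ))) t := by
    intro t
    exact ((hφdiff (x', t)).hasFDerivAt).comp_hasDerivAt t
      ((hasDerivAt_const t x').prodMk (hasDerivAt_id t))
  set G' : ℝ → ℝ :=
    fun t => s * |ψ t| ^ (s - 2) * ψ t * fderiv ℝ φ (x', t) ((0 : Fin k → ℝ), (1:ℝ)) with hG'
  have hder : ∀ t, HasDerivAt (fun t => |ψ t| ^ s) (G' t) t := by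
    intro t
    have := (hasDerivAt_abs_rpow (ψ t) hs).comp t (hline t)
    simpa [hG', mul_assoc, Function.comp_def] using this
  have hbound : ∀ t, |G' t| ≤ H (x', t) := by
    intro t
    rcases eq_or_ne (ψ t) 0 with h | h
    · have h' : φ (x', t) = 0 := h
      have hL : G' t = 0 := by
        show s * |ψ t| ^ (s - 2) * ψ t * _ = 0
        rw [h]; ring
      have hR : H (x', t) = 0 := by
        simp [hH, h', Real.zero_rpow (by linarith : s - 1 ≠ 0)]
      rw [hL, hR]; simp
    · have key : |ψ t| ^ (s - 2) * |ψ t| = |ψ t| ^ (s - 1) := by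
        rw [← Real.rpow_add_one (abs_ne_zero.2 h)]; ring_nf
      have heq : |G' t| = s * (|ψ t| ^ (s-1) * |fderiv ℝ φ (x', t) ((0 : Fin k → ℝ), (1:ℝ))|) := by
        rw [hG', abs_mul, abs_mul, abs_mul, abs_of_nonneg hs0.le,
          abs_of_nonneg (Real.rpow_nonneg (abs_nonneg _) _), ← key]
        ring
      exact le_of_eq heq
  have hmeas : Measurable G' := by
    have : G' = deriv (fun t => |ψ t| ^ s) := funext fun t => ((hder t).deriv).symm
    rw [this]; exact measurable_deriv _
  set T : ℝ := R + 1 with hT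
  have hT0 : (0:ℝ) ≤ T := by linarith
  have hnormsnd : ∀ t : ℝ, |t| ≤ ‖((x', t) : (Fin k → ℝ) × ℝ)‖ := fun t => by
    simpa using norm_snd_le ((x', t) : (Fin k → ℝ) × ℝ)
  have hψT : ψ T = 0 := by
    refine (hzero (x', T) ?_).1
    calc R < T := by rw [hT]; linarith
    _ = |T| := (abs_of_nonneg hT0).symm
    _ ≤ _ := hnormsnd T
  have hHcont' : Continuous (fun t => H (x', t)) :=
    hHcont.comp (continuous_const.prodMk continuous_id)
  have hHcs' : HasCompactSupport (fun t => H (x', t)) := by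
    apply HasCompactSupport.intro (isCompact_Icc (a := -R) (b := R))
    intro t ht
    have hRt : R < |t| := by
      rcases abs_cases t with ⟨h1, h2⟩ | ⟨h1, h2⟩ <;>
        · simp only [Set.mem_Icc, not_and_or, not_le] at ht
          rcases ht with h | h <;> [skip; skip] <;> rw [h1] <;> linarith
    have := (hzero (x', t) (lt_of_lt_of_le hRt (hnormsnd t))).1
    simp [hH, this, Real.zero_rpow (by linarith : s - 1 ≠ 0)]
  have hint' : IntegrableOn (fun t => H (x', t)) (Set.Ioi 0) volume :=
    (hHcont'.integrable_of_hasCompactSupport hHcs').integrableOn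
  have hII : IntervalIntegrable G' volume 0 T := by
    apply (hHcont'.intervalIntegrable 0 T).mono_fun hmeas.aestronglyMeasurable.restrict
    filter_upwards with t
    exact (hbound t).trans (le_abs_self _)
  have hFTC := intervalIntegral.integral_eq_sub_of_hasDerivAt (f := fun t => |ψ t| ^ s)
    (fun t _ => hder t) hII
  have h0 : |ψ 0| ^ s = - ∫ t in (0:ℝ)..T, G' t := by
    rw [hFTC]
    show |ψ 0| ^ s = -(|ψ T| ^ s - |ψ 0| ^ s)
    rw [hψT]
    simp [Real.zero_rpow hs0.ne']
  calc |φ (x', 0)| ^ s = - ∫ t in (0:ℝ)..T, G' t := h0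
    _ ≤ |∫ t in (0:ℝ)..T, G' t| := neg_le_abs _
    _ ≤ ∫ t in (0:ℝ)..T, |G' t| := intervalIntegral.abs_integral_le_integral_abs hT0
    _ ≤ ∫ t in (0:ℝ)..T, H (x', t) :=
        intervalIntegral.integral_mono_on hT0 hII.abs (hHcont'.intervalIntegrable 0 T)
          (fun t _ => hbound t)
    _ = ∫ t in Set.Ioc (0:ℝ) T, H (x', t) := intervalIntegral.integral_of_le hT0
    _ ≤ ∫ t in Set.Ioi (0:ℝ), H (x', t) := by
        apply setIntegral_mono_set hint'
        · filter_upwards with t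
          exact mul_nonneg hs0.le (mul_nonneg (Real.rpow_nonneg (abs_nonneg _) _) (abs_nonneg _))
        · exact (Set.Ioc_subset_Ioi_self).eventuallyLE

/-- Multiplicative trace estimate on the half-space `ℝⁿ₊ = ℝᵏ × (0,∞)` (with `k = n-1`):
for smooth compactly supported `φ`,
`‖φ(·,0)‖_{L^s}^s ≤ s ‖φ‖_{L^s(ℝⁿ₊)}^{s-1} ‖∂ₙφ‖_{L^s(ℝⁿ₊)}` and consequently
`‖φ(·,0)‖_{L^s} ≤ C ‖φ‖_{L^s}^{1/s'} ‖φ‖_{W^{1,s}}^{1/s}` with `C` depending only on `s`. -/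
theorem trace_multiplicative_halfspace (k : ℕ) (s : ℝ) (hs : 1 < s) :
    ∃ C > 0, ∀ φ : ((Fin k → ℝ) × ℝ) → ℝ, ContDiff ℝ (⊤ : ℕ∞) φ → HasCompactSupport φ →
      (∫ x' : Fin k → ℝ, |φ (x', 0)| ^ s) ≤
          s * ((∫ x in {p : (Fin k → ℝ) × ℝ | 0 < p.2}, |φ x| ^ s) ^ (1 / s)) ^ (s - 1) *
            (∫ x in {p : (Fin k → ℝ) × ℝ | 0 < p.2},
              |fderiv ℝ φ x (0, 1)| ^ s) ^ (1 / s) ∧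
      (∫ x' : Fin k → ℝ, |φ (x', 0)| ^ s) ^ (1 / s) ≤
          C * ((∫ x in {p : (Fin k → ℝ) × ℝ | 0 < p.2}, |φ x| ^ s) ^ (1 / s)) ^ (1 - 1 / s) *
            ((∫ x in {p : (Fin k → ℝ) × ℝ | 0 < p.2}, |φ x| ^ s) ^ (1 / s) +
              (∫ x in {p : (Fin k → ℝ) × ℝ | 0 < p.2}, ‖fderiv ℝ φ x‖ ^ s) ^ (1 / s)) ^ (1 / s) := by
  have hs0 : (0:ℝ) < s := by linarith
  have hs1 : s - 1 ≠ 0 := by intro h; linarith [sub_eq_zero.mp h]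
  refine ⟨s ^ (1/s), Real.rpow_pos_of_pos hs0 _, ?_⟩
  intro φ hφ hφc
  set S : Set ((Fin k → ℝ) × ℝ) := {p | 0 < p.2} with hSdef
  -- radius controlling the support
  obtain ⟨R₀, hR₀⟩ := hφc.isBounded.subset_closedBall 0
  set R : ℝ := max R₀ 0 with hRdef
  have hR0 : (0:ℝ) ≤ R := le_max_right _ _
  have hRsub : tsupport φ ⊆ Metric.closedBall 0 R :=
    hR₀.trans (Metric.closedBall_subset_closedBall (le_max_left _ _))
  have hzero : ∀ x : (Fin k → ℝ) × ℝ, R < ‖x‖ → φ x = 0 ∧ fderiv ℝ φ x = 0 := by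
    intro x hx
    have hx' : x ∉ tsupport φ := by
      intro hmem
      have := hRsub hmem
      rw [Metric.mem_closedBall, dist_zero_right] at this
      linarith
    refine ⟨image_eq_zero_of_notMem_tsupport hx', ?_⟩
    by_contra hne
    exact hx' (support_fderiv_subset ℝ (by simpa [Function.mem_support] using hne))
  have hout : ∀ x : (Fin k → ℝ) × ℝ, x ∉ Metric.closedBall (0 : (Fin k → ℝ) × ℝ) R →
      φ x = 0 ∧ fderiv ℝ φ x = 0 := by
    intro x hx
    exact hzero x (by rwa [Metric.mem_closedBall, dist_zero_right, not_le] at hx)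
  -- continuity facts
  have hfdcont : Continuous (fderiv ℝ φ) := hφ.continuous_fderiv (by simp)
  have hfdapp : Continuous (fun x => fderiv ℝ φ x ((0 : Fin k → ℝ), (1:ℝ))) :=
    hfdcont.clm_apply continuous_const
  -- the integrands
  set F1 : ((Fin k → ℝ) × ℝ) → ℝ := fun x => |φ x| ^ s with hF1
  set F2 : ((Fin k → ℝ) × ℝ) → ℝ :=
    fun x => |fderiv ℝ φ x ((0 : Fin k → ℝ), (1:ℝ))| ^ s with hF2
  set F3 : ((Fin k → ℝ) × ℝ) → ℝ := fun x => ‖fderiv ℝ φ x‖ ^ s with hF3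
  set Fq : ((Fin k → ℝ) × ℝ) → ℝ := fun x => |φ x| ^ (s - 1) with hFq
  set Fd : ((Fin k → ℝ) × ℝ) → ℝ :=
    fun x => |fderiv ℝ φ x ((0 : Fin k → ℝ), (1:ℝ))| with hFd
  set H : ((Fin k → ℝ) × ℝ) → ℝ := fun x => s * (Fq x * Fd x) with hHdef
  have hc1 : Continuous F1 :=
    (continuous_abs.comp hφ.continuous).rpow_const fun _ => Or.inr hs0.le
  have hc2 : Continuous F2 := hfdapp.abs.rpow_const fun _ => Or.inr hs0.le
  have hc3 : Continuous F3 := hfdcont.norm.rpow_const fun _ => Or.inr hs0.le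
  have hcq : Continuous Fq :=
    (continuous_abs.comp hφ.continuous).rpow_const fun _ => Or.inr (by linarith)
  have hcd : Continuous Fd := hfdapp.abs
  have hcH : Continuous H := continuous_const.mul (hcq.mul hcd)
  have hcs1 : HasCompactSupport F1 := by
    apply HasCompactSupport.intro (isCompact_closedBall (0 : (Fin k → ℝ) × ℝ) R)
    intro x hx; simp [hF1, (hout x hx).1, Real.zero_rpow hs0.ne']
  have hcs2 : HasCompactSupport F2 := by
    apply HasCompactSupport.intro (isCompact_closedBall (0 : (Fin k → ℝ) × ℝ) R)
    intro x hx; simp [hF2, (hout x hx).2, Real.zero_rpow hs0.ne']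
  have hcs3 : HasCompactSupport F3 := by
    apply HasCompactSupport.intro (isCompact_closedBall (0 : (Fin k → ℝ) × ℝ) R)
    intro x hx; simp [hF3, (hout x hx).2, Real.zero_rpow hs0.ne']
  have hcsq : HasCompactSupport Fq := by
    apply HasCompactSupport.intro (isCompact_closedBall (0 : (Fin k → ℝ) × ℝ) R)
    intro x hx; simp [hFq, (hout x hx).1, Real.zero_rpow hs1]
  have hcsd : HasCompactSupport Fd := by
    apply HasCompactSupport.intro (isCompact_closedBall (0 : (Fin k → ℝ) × ℝ) R)
    intro x hx; simp [hFd, (hout x hx).2]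
  have hcsH : HasCompactSupport H := by
    apply HasCompactSupport.intro (isCompact_closedBall (0 : (Fin k → ℝ) × ℝ) R)
    intro x hx; simp [hHdef, hFq, (hout x hx).1, Real.zero_rpow hs1]
  -- nonnegativity of the main integrals
  have hA0 : 0 ≤ ∫ x in S, F1 x :=
    integral_nonneg fun x => Real.rpow_nonneg (abs_nonneg _) _
  have hB0 : 0 ≤ ∫ x in S, F2 x :=
    integral_nonneg fun x => Real.rpow_nonneg (abs_nonneg _) _
  have hD0 : 0 ≤ ∫ x in S, F3 x :=
    integral_nonneg fun x => Real.rpow_nonneg (norm_nonneg _) _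
  -- the product structure of the measure on the half space
  have hrestrict : (volume : Measure ((Fin k → ℝ) × ℝ)).restrict S =
      (volume : Measure (Fin k → ℝ)).prod ((volume : Measure ℝ).restrict (Set.Ioi 0)) := by
    have hseq : S = Set.univ ×ˢ Set.Ioi (0:ℝ) := by
      ext p; simp [hSdef, Set.mem_prod]
    rw [Measure.volume_eq_prod, hseq, ← Measure.prod_restrict, Measure.restrict_univ]
  have hHprod : Integrable H ((volume : Measure (Fin k → ℝ)).prod
      ((volume : Measure ℝ).restrict (Set.Ioi 0))) := by
    rw [← hrestrict]
    exact (hcH.integrable_of_hasCompactSupport hcsH).restrict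
  -- integrability of the boundary integrand
  have hbc : Continuous (fun x' : Fin k → ℝ => |φ (x', 0)| ^ s) := by
    exact ((continuous_abs.comp
      (hφ.continuous.comp (continuous_id.prodMk continuous_const))).rpow_const
      fun _ => Or.inr hs0.le)
  have hbcs : HasCompactSupport (fun x' : Fin k → ℝ => |φ (x', 0)| ^ s) := by
    apply HasCompactSupport.intro (isCompact_closedBall (0 : Fin k → ℝ) R)
    intro x' hx'
    have h1 : R < ‖x'‖ := by rwa [Metric.mem_closedBall, dist_zero_right, not_le] at hx'
    have h2 : R < ‖((x', 0) : (Fin k → ℝ) × ℝ)‖ :=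
      lt_of_lt_of_le h1 (norm_fst_le ((x', 0) : (Fin k → ℝ) × ℝ))
    simp [(hzero _ h2).1, Real.zero_rpow hs0.ne']
  have hbint : Integrable (fun x' : Fin k → ℝ => |φ (x', 0)| ^ s) :=
    hbc.integrable_of_hasCompactSupport hbcs
  -- step 1: the boundary integral is controlled by the integral of H over S
  have key1 : (∫ x' : Fin k → ℝ, |φ (x', 0)| ^ s) ≤ ∫ x in S, H x := by
    have step1 : (∫ x' : Fin k → ℝ, |φ (x', 0)| ^ s) ≤
        ∫ x' : Fin k → ℝ, ∫ t in Set.Ioi (0:ℝ), H (x', t) := by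
      refine integral_mono hbint hHprod.integral_prod_left ?_
      intro x'
      exact trace_slice_est k s hs φ hφ R hR0 hzero x'
    have step2 : (∫ x in S, H x) = ∫ x' : Fin k → ℝ, ∫ t in Set.Ioi (0:ℝ), H (x', t) := by
      rw [show (∫ x in S, H x) = ∫ x, H x ∂((volume : Measure (Fin k → ℝ)).prod
        ((volume : Measure ℝ).restrict (Set.Ioi 0))) from by rw [← hrestrict]]
      exact MeasureTheory.integral_prod H hHprod
    rw [step2]; exact step1
  -- step 2: Hölder's inequality on the half space
  have hpq : (s/(s-1)).HolderConjugate s := (Real.HolderConjugate.conjExponent hs).symm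
  have hmemq : MemLp Fq (ENNReal.ofReal (s/(s-1))) ((volume :
      Measure ((Fin k → ℝ) × ℝ)).restrict S) :=
    (hcq.memLp_of_hasCompactSupport hcsq).restrict S
  have hmemd : MemLp Fd (ENNReal.ofReal s) ((volume :
      Measure ((Fin k → ℝ) × ℝ)).restrict S) :=
    (hcd.memLp_of_hasCompactSupport hcsd).restrict S
  have holder := integral_mul_le_Lp_mul_Lq_of_nonneg (μ := volume.restrict S) hpq
    (Filter.Eventually.of_forall fun x => Real.rpow_nonneg (abs_nonneg _) _)
    (Filter.Eventually.of_forall fun x => abs_nonneg _) hmemq hmemd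
  have e1 : ∀ x : (Fin k → ℝ) × ℝ, Fq x ^ (s/(s-1)) = F1 x := by
    intro x
    rw [hFq, hF1, ← Real.rpow_mul (abs_nonneg _),
      show (s-1)*(s/(s-1)) = s from by field_simp]
  have e2 : ∀ x : (Fin k → ℝ) × ℝ, Fd x ^ s = F2 x := fun x => rfl
  rw [show (∫ x in S, Fq x ^ (s/(s-1))) = ∫ x in S, F1 x from by
      exact integral_congr_ae (Filter.Eventually.of_forall fun x => e1 x),
    show (∫ x in S, Fd x ^ s) = ∫ x in S, F2 x from by
      exact integral_congr_ae (Filter.Eventually.of_forall fun x => e2 x)] at holder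
  have e3 : (∫ x in S, F1 x) ^ (1/(s/(s-1))) = ((∫ x in S, F1 x) ^ (1/s)) ^ (s - 1) := by
    rw [← Real.rpow_mul hA0, show (1/s)*(s-1) = 1/(s/(s-1)) from by
      rw [one_div_div]; ring]
  rw [e3] at holder
  have hintH : (∫ x in S, H x) = s * ∫ x in S, Fq x * Fd x := by
    rw [hHdef]; exact integral_const_mul s _
  have ineq1 : (∫ x' : Fin k → ℝ, |φ (x', 0)| ^ s) ≤
      s * ((∫ x in S, F1 x) ^ (1 / s)) ^ (s - 1) * ((∫ x in S, F2 x) ^ (1 / s)) := by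
    calc (∫ x' : Fin k → ℝ, |φ (x', 0)| ^ s) ≤ ∫ x in S, H x := key1
      _ = s * ∫ x in S, Fq x * Fd x := hintH
      _ ≤ s * (((∫ x in S, F1 x) ^ (1/s)) ^ (s - 1) * ((∫ x in S, F2 x) ^ (1/s))) :=
          mul_le_mul_of_nonneg_left holder hs0.le
      _ = s * ((∫ x in S, F1 x) ^ (1 / s)) ^ (s - 1) * ((∫ x in S, F2 x) ^ (1 / s)) := by ring
  refine ⟨ineq1, ?_⟩
  -- step 3: the second inequality
  set a : ℝ := (∫ x in S, F1 x) ^ (1/s) with hadef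
  set b : ℝ := (∫ x in S, F2 x) ^ (1/s) with hbdef
  set d : ℝ := (∫ x in S, F3 x) ^ (1/s) with hddef
  have ha : 0 ≤ a := Real.rpow_nonneg hA0 _
  have hb : 0 ≤ b := Real.rpow_nonneg hB0 _
  have hd : 0 ≤ d := Real.rpow_nonneg hD0 _
  have hI0 : 0 ≤ ∫ x' : Fin k → ℝ, |φ (x', 0)| ^ s :=
    integral_nonneg fun x => Real.rpow_nonneg (abs_nonneg _) _
  have hnorm01 : ‖((0 : Fin k → ℝ), (1:ℝ))‖ = 1 := by simp [Prod.norm_def]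
  have hBD : (∫ x in S, F2 x) ≤ ∫ x in S, F3 x := by
    refine integral_mono ((hc2.integrable_of_hasCompactSupport hcs2).restrict)
      ((hc3.integrable_of_hasCompactSupport hcs3).restrict) ?_
    intro x
    refine Real.rpow_le_rpow (abs_nonneg _) ?_ hs0.le
    calc |fderiv ℝ φ x ((0 : Fin k → ℝ), (1:ℝ))|
        = ‖fderiv ℝ φ x ((0 : Fin k → ℝ), (1:ℝ))‖ := rfl
      _ ≤ ‖fderiv ℝ φ x‖ * ‖((0 : Fin k → ℝ), (1:ℝ))‖ := (fderiv ℝ φ x).le_opNorm _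
      _ = ‖fderiv ℝ φ x‖ := by rw [hnorm01, mul_one]
  have hbd : b ≤ d := Real.rpow_le_rpow hB0 hBD (by positivity)
  have hbad : b ≤ a + d := hbd.trans (le_add_of_nonneg_left ha)
  have hstep : (∫ x' : Fin k → ℝ, |φ (x', 0)| ^ s) ≤ s * a ^ (s-1) * (a + d) := by
    calc (∫ x' : Fin k → ℝ, |φ (x', 0)| ^ s) ≤ s * a ^ (s-1) * b := ineq1
      _ ≤ s * a ^ (s-1) * (a + d) := by
          apply mul_le_mul_of_nonneg_left hbad
          positivity
  calc (∫ x' : Fin k → ℝ, |φ (x', 0)| ^ s) ^ (1/s)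
      ≤ (s * a ^ (s-1) * (a + d)) ^ (1/s) :=
        Real.rpow_le_rpow hI0 hstep (by positivity)
    _ = s ^ (1/s) * (a ^ (s-1)) ^ (1/s) * (a + d) ^ (1/s) := by
        rw [Real.mul_rpow (by positivity) (by positivity),
          Real.mul_rpow hs0.le (by positivity)]
    _ = s ^ (1/s) * a ^ (1 - 1/s) * (a + d) ^ (1/s) := by
        rw [← Real.rpow_mul ha, show (s-1)*(1/s) = 1 - 1/s from by field_simp]
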